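/- Let A be a 2-dimensional complex vector space with basis a₁, a₂, and let B, C be complex vector spaces with B = B₁ ⊕ B₂, C = C₁ ⊕ C₂, where B₁ = ⟨b₁,b₂⟩, B₂ = ⟨b₃,b₄⟩, C₁ = ⟨c₁,c₂⟩, C₂ = ⟨c₃,c₄⟩. Let φ₁ = a₁⊗(b₁⊗c₁ + b₂⊗c₂), φ₂ = a₂⊗(b₃⊗c₃ + b₄⊗c₄), and for nonzero scalars λ₁, λ₂, λ₃ ∈ ℂ let ψ₀ = −λ₂ b₁⊗c₂ + λ₁ b₂⊗c₁ + λ₃(b₁⊗c₁ + b₂⊗c₂) and ψ = a₁⊗ψ₀. Then [ψ] ≠ [φ₁], [φ₂], and for any scalars λ₁', λ₂', λ₃' the functional H := a₂*⊗(λ₁ b₁*⊗c₂* + λ₂ b₂*⊗c₁* + λ₃(b₁*⊗c₁* − b₂*⊗c₂*)) + a₁*⊗(λ₁' b₄*⊗c₃* + λ₂' b₃*⊗c₄* + λ₃'(b₄*⊗c₄* − b₃*⊗c₃*)) vanishes on the subspace T(ψ) := ⟨a₁⟩⊗B⊗C₁ + ⟨a₁⟩⊗B₁⊗C + A⊗⟨ψ₀⟩.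 -/
import Mathlib


open TensorProduct

noncomputable section

abbrev A2 : Type := Fin 2 → ℂ
abbrev V4 : Type := Fin 4 → ℂ
abbrev T3 : Type := A2 ⊗[ℂ] (V4 ⊗[ℂ] V4)

def aa (i : Fin 2) : A2 := Pi.basisFun ℂ (Fin 2) i
def ee (i : Fin 4) : V4 := Pi.basisFun ℂ (Fin 4) i

/-- coordinate functionals: the dual bases -/
def aa' (i : Fin 2) : Module.Dual ℂ A2 := LinearMap.proj i
def ee' (i : Fin 4) : Module.Dual ℂ V4 := LinearMap.proj i

/-- The subspace `X ⊗ Y ⊗ Z` of `A ⊗ B ⊗ C`. -/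
def tp3 (X : Submodule ℂ A2) (Y Z : Submodule ℂ V4) : Submodule ℂ T3 :=
  Submodule.span ℂ {w | ∃ x ∈ X, ∃ y ∈ Y, ∃ z ∈ Z, w = x ⊗ₜ[ℂ] (y ⊗ₜ[ℂ] z)}

/-- `A ⊗ ⟨θ⟩` for `θ ∈ B ⊗ C`. -/
def modA (θ : V4 ⊗[ℂ] V4) : Submodule ℂ T3 :=
  LinearMap.range ((TensorProduct.mk ℂ A2 (V4 ⊗[ℂ] V4)).flip θ)

/-- the functional `f ⊗ g ⊗ h ∈ (A⊗B⊗C)*`. -/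
def dfun (f : Module.Dual ℂ A2) (g h : Module.Dual ℂ V4) : Module.Dual ℂ T3 :=
  TensorProduct.dualDistrib ℂ A2 (V4 ⊗[ℂ] V4)
    (f ⊗ₜ[ℂ] (TensorProduct.dualDistrib ℂ V4 V4 (g ⊗ₜ[ℂ] h)))

def φ₁ : T3 := aa 0 ⊗ₜ[ℂ] (ee 0 ⊗ₜ[ℂ] ee 0 + ee 1 ⊗ₜ[ℂ] ee 1)
def φ₂ : T3 := aa 1 ⊗ₜ[ℂ] (ee 2 ⊗ₜ[ℂ] ee 2 + ee 3 ⊗ₜ[ℂ] ee 3)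

def ψ₀ (l₁ l₂ l₃ : ℂ) : V4 ⊗[ℂ] V4 :=
  (-l₂) • (ee 0 ⊗ₜ[ℂ] ee 1) + l₁ • (ee 1 ⊗ₜ[ℂ] ee 0) +
    l₃ • (ee 0 ⊗ₜ[ℂ] ee 0 + ee 1 ⊗ₜ[ℂ] ee 1)

def ψ (l₁ l₂ l₃ : ℂ) : T3 := aa 0 ⊗ₜ[ℂ] ψ₀ l₁ l₂ l₃

/-- the hyperplane tangent at `φ₁`, `φ₂` -/
def H (l₁ l₂ l₃ m₁ m₂ m₃ : ℂ) : Module.Dual ℂ T3 :=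
  l₁ • dfun (aa' 1) (ee' 0) (ee' 1) + l₂ • dfun (aa' 1) (ee' 1) (ee' 0) +
    l₃ • (dfun (aa' 1) (ee' 0) (ee' 0) - dfun (aa' 1) (ee' 1) (ee' 1)) +
    m₁ • dfun (aa' 0) (ee' 3) (ee' 2) + m₂ • dfun (aa' 0) (ee' 2) (ee' 3) +
    m₃ • (dfun (aa' 0) (ee' 3) (ee' 3) - dfun (aa' 0) (ee' 2) (ee' 2))

/-- the affine tangent space at `ψ`:
`⟨a₁⟩⊗B⊗C₁ + ⟨a₁⟩⊗B₁⊗C + A⊗⟨ψ₀⟩`. -/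
def Tψ (l₁ l₂ l₃ : ℂ) : Submodule ℂ T3 :=
  tp3 (Submodule.span ℂ {aa 0}) ⊤ (Submodule.span ℂ {ee 0, ee 1}) ⊔
    tp3 (Submodule.span ℂ {aa 0}) (Submodule.span ℂ {ee 0, ee 1}) ⊤ ⊔
    modA (ψ₀ l₁ l₂ l₃)

lemma dfun_apply (f : Module.Dual ℂ A2) (g h : Module.Dual ℂ V4) (x : A2) (y z : V4) :
    dfun f g h (x ⊗ₜ[ℂ] (y ⊗ₜ[ℂ] z)) = f x * (g y * h z) := by
  simp [dfun, TensorProduct.dualDistrib_apply]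

@[simp] lemma aa'_aa (i j : Fin 2) : aa' i (aa j) = if j = i then 1 else 0 := by
  rcases eq_or_ne i j with h | h
  · simp [aa', aa, h]
  · simp [aa', aa, h, h.symm, Pi.single_apply]

@[simp] lemma ee'_ee (i j : Fin 4) : ee' i (ee j) = if j = i then 1 else 0 := by
  rcases eq_or_ne i j with h | h
  · simp [ee', ee, h]
  · simp [ee', ee, h, h.symm, Pi.single_apply]

lemma span_pair_le_ker (i : Fin 4) (hi : i ≠ 0 ∧ i ≠ 1) :
    Submodule.span ℂ {ee 0, ee 1} ≤ LinearMap.ker (ee' i) := by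
  rw [Submodule.span_le]
  rintro v (rfl | rfl) <;>
    simp [LinearMap.mem_ker, Fin.ext_iff] <;> omega

/-- For any nonzero `λ₁, λ₂, λ₃` and any `λ₁′, λ₂′, λ₃′`, the functional `H`
(which annihilates the tangent spaces at `φ₁` and `φ₂`) also annihilates the
tangent space at the third point `ψ`, and `[ψ] ≠ [φ₁], [φ₂]`: weak defectivity
of `σ₂(Sub₍₁,₂,₂₎(ℂ²⊗ℂ⁴⊗ℂ⁴))`. -/
theorem tangent_hyperplane_at_third_point (l₁ l₂ l₃ m₁ m₂ m₃ : ℂ)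
    (h₁ : l₁ ≠ 0) (h₂ : l₂ ≠ 0) (h₃ : l₃ ≠ 0) :
    H l₁ l₂ l₃ m₁ m₂ m₃ ∈ (Tψ l₁ l₂ l₃).dualAnnihilator ∧
      (∀ c : ℂ, ψ l₁ l₂ l₃ ≠ c • φ₁) ∧ (∀ c : ℂ, ψ l₁ l₂ l₃ ≠ c • φ₂) := by
  refine ⟨?_, ?_, ?_⟩
  · rw [Submodule.mem_dualAnnihilator]
    intro w hw
    have key : Tψ l₁ l₂ l₃ ≤ LinearMap.ker (H l₁ l₂ l₃ m₁ m₂ m₃) := by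
      refine sup_le (sup_le ?_ ?_) ?_
      · rw [tp3, Submodule.span_le]
        rintro w ⟨x, hx, y, -, z, hz, rfl⟩
        obtain ⟨c, rfl⟩ := Submodule.mem_span_singleton.mp hx
        have hz2 : ee' 2 z = 0 := span_pair_le_ker 2 (by decide) hz
        have hz3 : ee' 3 z = 0 := span_pair_le_ker 3 (by decide) hz
        simp [LinearMap.mem_ker, H, dfun_apply, hz2, hz3, smul_tmul']
      · rw [tp3, Submodule.span_le]
        rintro w ⟨x, hx, y, hy, z, -, rfl⟩
        obtain ⟨c, rfl⟩ := Submodule.mem_span_singleton.mp hx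
        have hy2 : ee' 2 y = 0 := span_pair_le_ker 2 (by decide) hy
        have hy3 : ee' 3 y = 0 := span_pair_le_ker 3 (by decide) hy
        simp [LinearMap.mem_ker, H, dfun_apply, hy2, hy3, smul_tmul']
      · rintro w ⟨a, rfl⟩
        simp only [LinearMap.mem_ker, LinearMap.flip_apply, TensorProduct.mk_apply,
          H, ψ₀, LinearMap.add_apply, LinearMap.sub_apply, LinearMap.smul_apply,
          tmul_add, tmul_smul, map_add, map_smul, dfun_apply, ee'_ee, smul_eq_mul]
        norm_num [Fin.ext_iff, show ((3 : Fin 4) : ℕ) = 3 from rfl]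
        ring
    exact key hw
  · intro c h
    have := congrArg (dfun (aa' 0) (ee' 0) (ee' 1)) h
    simp only [ψ, ψ₀, φ₁, tmul_add, tmul_smul, map_add, map_smul,
      dfun_apply, ee'_ee, aa'_aa, smul_eq_mul] at this
    norm_num at this
    exact h₂ this
  · intro c h
    have := congrArg (dfun (aa' 0) (ee' 1) (ee' 0)) h
    simp only [ψ, ψ₀, φ₂, tmul_add, tmul_smul, map_add, map_smul,
      dfun_apply, ee'_ee, aa'_aa, smul_eq_mul] at this
    norm_num at this
    exact h₁ this

end
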